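/- arXiv:1808.02530 — 5 statements merged into one kernel-verified Lean document; each statement's English description precedes it below -/
import Mathlib

section
/- Let A ∈ ℝ^{m×n}, let M ∈ ℝ^{n×n} be symmetric positive semidefinite, and let S ∈ ℝ^{n×p}. Then the matrix Z_S = S P_S (P_S^T S^T M S P_S)† P_S^T S^T is symmetric and positive semidefinite, and Z_S u = 0 for every u in the range of A^T; that is, range(A^T) ⊆ ker(Z_S). -/
open Matrix

private lemma ctr {k l : Type*} (A : Matrix k l ℝ) : Aᴴ = Aᵀ := by
  ext i j; simp [conjTranspose_apply]

/-- A symmetric "spectral" pseudoinverse for a hermitian real matrix. -/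
private lemma herm_pinv {k : Type*} [Fintype k] [DecidableEq k]
    {G : Matrix k k ℝ} (hG : G.IsHermitian) :
    ∃ X : Matrix k k ℝ, Xᵀ = X ∧ G * X = X * G ∧ G * X * G = G ∧ X * G * X = X := by
  set U : Matrix k k ℝ := (hG.eigenvectorUnitary : Matrix k k ℝ) with hU
  have hUU' : star U * U = 1 := (Matrix.mem_unitaryGroup_iff').mp hG.eigenvectorUnitary.2
  set d : k → ℝ := RCLike.ofReal ∘ hG.eigenvalues with hd
  have hspec : G = U * diagonal d * star U := hG.spectral_theorem
  refine ⟨U * diagonal (fun i => (d i)⁻¹) * star U, ?_, ?_, ?_, ?_⟩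
  · have hsU : star U = Uᵀ := ctr U
    rw [hsU, transpose_mul, transpose_mul, transpose_transpose, diagonal_transpose,
      Matrix.mul_assoc]
  · rw [hspec]
    calc (U * diagonal d * star U) * (U * diagonal (fun i => (d i)⁻¹) * star U)
        = U * (diagonal d * (star U * U) * diagonal (fun i => (d i)⁻¹)) * star U := by
          noncomm_ring
      _ = U * (diagonal (fun i => (d i)⁻¹) * (star U * U) * diagonal d) * star U := by
          rw [hUU', mul_one, mul_one, diagonal_mul_diagonal, diagonal_mul_diagonal]
          have : (fun i => d i * (d i)⁻¹) = (fun i => (d i)⁻¹ * d i) := by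
            funext i; ring
          rw [this]
      _ = (U * diagonal (fun i => (d i)⁻¹) * star U) * (U * diagonal d * star U) := by
          noncomm_ring
  · rw [hspec]
    calc (U * diagonal d * star U) * (U * diagonal (fun i => (d i)⁻¹) * star U)
          * (U * diagonal d * star U)
        = U * (diagonal d * (star U * U) * diagonal (fun i => (d i)⁻¹) * (star U * U)
            * diagonal d) * star U := by noncomm_ring
      _ = U * diagonal d * star U := by
          rw [hUU', mul_one, mul_one, diagonal_mul_diagonal, diagonal_mul_diagonal]
          have : (fun i => d i * (d i)⁻¹ * d i) = d := by
            funext i; by_cases h : d i = 0 <;> field_simp [h]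
          rw [this]
  · rw [hspec]
    calc (U * diagonal (fun i => (d i)⁻¹) * star U) * (U * diagonal d * star U)
          * (U * diagonal (fun i => (d i)⁻¹) * star U)
        = U * (diagonal (fun i => (d i)⁻¹) * (star U * U) * diagonal d * (star U * U)
            * diagonal (fun i => (d i)⁻¹)) * star U := by noncomm_ring
      _ = U * diagonal (fun i => (d i)⁻¹) * star U := by
          rw [hUU', mul_one, mul_one, diagonal_mul_diagonal, diagonal_mul_diagonal]
          have : (fun i => (d i)⁻¹ * d i * (d i)⁻¹) = (fun i => (d i)⁻¹) := by
            funext i; by_cases h : d i = 0 <;> field_simp [h]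
          rw [this]

/-- Existence of a Moore–Penrose pseudoinverse for any real matrix. -/
private lemma mpinv_exists {k l : Type*} [Fintype k] [Fintype l] [DecidableEq l]
    (B : Matrix k l ℝ) :
    ∃ X : Matrix l k ℝ,
      B * X * B = B ∧ X * B * X = X ∧ (B * X)ᵀ = B * X ∧ (X * B)ᵀ = X * B := by
  have hG : (Bᵀ * B).IsHermitian := by
    show (Bᵀ * B)ᴴ = Bᵀ * B
    rw [ctr (Bᵀ * B), transpose_mul, transpose_transpose]
  obtain ⟨X0, hX0T, hcomm, hGXG, hXGX⟩ := herm_pinv hG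
  have hGdef : True := trivial
  generalize hGg : Bᵀ * B = G at hcomm hGXG hXGX
  have hGT : Gᵀ = G := by rw [← hGg, transpose_mul, transpose_transpose]
  have hQsym : (X0 * G)ᵀ = X0 * G := by rw [transpose_mul, hX0T, hGT, hcomm]
  have hQG : X0 * G * G = G := by rw [← hcomm, hGXG]
  have hGQ : G * (X0 * G) = G := by rw [← Matrix.mul_assoc, hGXG]
  have hBQ : Bᵀ * (B * (X0 * G)) = G := by rw [← Matrix.mul_assoc, hGg, hGQ]
  have hkey : B * (X0 * G) = B := by
    have hC : (B * (X0 * G) - B)ᵀ * (B * (X0 * G) - B) = 0 := by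
      have t1 : (B * (X0 * G))ᵀ * (B * (X0 * G)) = G := by
        rw [transpose_mul, Matrix.mul_assoc, hBQ, hQsym, hQG]
      have t2 : (B * (X0 * G))ᵀ * B = G := by
        rw [transpose_mul, Matrix.mul_assoc, hGg, hQsym, hQG]
      rw [transpose_sub, Matrix.sub_mul, Matrix.mul_sub, Matrix.mul_sub, t1, t2, hBQ, hGg]
      abel
    rw [← ctr] at hC
    exact sub_eq_zero.mp (conjTranspose_mul_self_eq_zero.mp hC)
  refine ⟨X0 * Bᵀ, ?_, ?_, ?_, ?_⟩
  · calc B * (X0 * Bᵀ) * B = B * (X0 * (Bᵀ * B)) := by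
          rw [Matrix.mul_assoc B (X0 * Bᵀ) B, Matrix.mul_assoc X0 Bᵀ B]
      _ = B * (X0 * G) := by rw [hGg]
      _ = B := hkey
  · calc X0 * Bᵀ * B * (X0 * Bᵀ) = X0 * (Bᵀ * B) * X0 * Bᵀ := by
          rw [Matrix.mul_assoc X0 Bᵀ B, Matrix.mul_assoc (X0 * (Bᵀ * B)) X0 Bᵀ]
      _ = X0 * G * X0 * Bᵀ := by rw [hGg]
      _ = X0 * Bᵀ := by rw [hXGX]
  · calc (B * (X0 * Bᵀ))ᵀ = B * X0ᵀ * Bᵀ := by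
          rw [transpose_mul, transpose_mul, transpose_transpose]
      _ = B * (X0 * Bᵀ) := by rw [hX0T, Matrix.mul_assoc]
  · calc (X0 * Bᵀ * B)ᵀ = (X0 * G)ᵀ := by rw [Matrix.mul_assoc, hGg]
      _ = X0 * G := hQsym
      _ = X0 * Bᵀ * B := by rw [← hGg, Matrix.mul_assoc]

/-- Uniqueness of the Moore–Penrose pseudoinverse. -/
private lemma mpinv_unique {k l : Type*} [Fintype k] [Fintype l]
    (B : Matrix k l ℝ) (X Y : Matrix l k ℝ)
    (hX1 : B * X * B = B) (hX2 : X * B * X = X) (hX3 : (B * X)ᵀ = B * X)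
    (hX4 : (X * B)ᵀ = X * B)
    (hY1 : B * Y * B = B) (hY2 : Y * B * Y = Y) (hY3 : (B * Y)ᵀ = B * Y)
    (hY4 : (Y * B)ᵀ = Y * B) : X = Y := by
  have h1 : X = X * B * Y := by
    calc X = X * B * X := hX2.symm
      _ = X * (B * X)ᵀ := by rw [hX3, Matrix.mul_assoc]
      _ = X * (B * Y * B * X)ᵀ := by rw [hY1]
      _ = X * ((B * X)ᵀ * (B * Y)ᵀ) := by
          rw [show B * Y * B * X = (B * Y) * (B * X) from by simp only [Matrix.mul_assoc],
            transpose_mul]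
      _ = X * (B * X) * (B * Y) := by rw [hX3, hY3]; simp only [Matrix.mul_assoc]
      _ = X * B * Y := by
          rw [show X * (B * X) * (B * Y) = (X * B * X) * B * Y from by simp only [Matrix.mul_assoc], hX2]
  have h2 : Y = X * B * Y := by
    calc Y = Y * B * Y := hY2.symm
      _ = (Y * B)ᵀ * Y := by rw [hY4]
      _ = (Y * (B * X * B))ᵀ * Y := by rw [hX1]
      _ = ((X * B)ᵀ * (Y * B)ᵀ) * Y := by
          rw [show Y * (B * X * B) = (Y * B) * (X * B) from by simp only [Matrix.mul_assoc], transpose_mul]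
      _ = (X * B) * (Y * B) * Y := by rw [hX4, hY4]
      _ = X * B * Y := by
          rw [show (X * B) * (Y * B) * Y = X * B * (Y * B * Y) from by simp only [Matrix.mul_assoc], hY2]
  rw [h1, ← h2]

open Classical in
noncomputable def mpinv {k l : Type*} [Fintype k] [Fintype l] (B : Matrix k l ℝ) :
    Matrix l k ℝ :=
  if h : ∃ X : Matrix l k ℝ,
      B * X * B = B ∧ X * B * X = X ∧ (B * X)ᵀ = B * X ∧ (X * B)ᵀ = X * B
  then h.choose else 0

private lemma mpinv_spec {k l : Type*} [Fintype k] [Fintype l] [DecidableEq l]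
    (B : Matrix k l ℝ) :
    B * mpinv B * B = B ∧ mpinv B * B * mpinv B = mpinv B ∧
      (B * mpinv B)ᵀ = B * mpinv B ∧ (mpinv B * B)ᵀ = mpinv B * B := by
  have h := mpinv_exists B
  rw [mpinv, dif_pos h]
  exact h.choose_spec

/-- The pseudoinverse of a symmetric matrix is symmetric. -/
private lemma mpinv_symm {k : Type*} [Fintype k] [DecidableEq k]
    {G : Matrix k k ℝ} (hGT : Gᵀ = G) : (mpinv G)ᵀ = mpinv G := by
  obtain ⟨h1, h2, h3, h4⟩ := mpinv_spec G
  refine mpinv_unique G (mpinv G)ᵀ (mpinv G) ?_ ?_ ?_ ?_ h1 h2 h3 h4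
  · calc G * (mpinv G)ᵀ * G = (G * (mpinv G * G))ᵀ := by
          rw [transpose_mul, transpose_mul, hGT]
      _ = Gᵀ := by rw [← Matrix.mul_assoc, h1]
      _ = G := hGT
  · calc (mpinv G)ᵀ * G * (mpinv G)ᵀ = (mpinv G * (G * mpinv G))ᵀ := by
          rw [transpose_mul, transpose_mul, hGT]
      _ = (mpinv G)ᵀ := by rw [← Matrix.mul_assoc, h2]
  · calc (G * (mpinv G)ᵀ)ᵀ = mpinv G * Gᵀ := by rw [transpose_mul, transpose_transpose]
      _ = (mpinv G * G)ᵀ := by rw [hGT, h4]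
      _ = Gᵀ * (mpinv G)ᵀ := transpose_mul _ _
      _ = G * (mpinv G)ᵀ := by rw [hGT]
  · calc ((mpinv G)ᵀ * G)ᵀ = Gᵀ * mpinv G := by rw [transpose_mul, transpose_transpose]
      _ = (G * mpinv G)ᵀ := by rw [hGT, h3]
      _ = (mpinv G)ᵀ * Gᵀ := transpose_mul _ _
      _ = (mpinv G)ᵀ * G := by rw [hGT]

/-- `P_S = I - (AS)†(AS)`, the orthogonal projection onto `ker(AS)`. -/
noncomputable def Pmat {m n p : ℕ} (A : Matrix (Fin m) (Fin n) ℝ)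
    (S : Matrix (Fin n) (Fin p) ℝ) : Matrix (Fin p) (Fin p) ℝ :=
  1 - mpinv (A * S) * (A * S)

/-- `Z_S = S P_S (P_Sᵀ Sᵀ M S P_S)† P_Sᵀ Sᵀ`. -/
noncomputable def Zmat {m n p : ℕ} (A : Matrix (Fin m) (Fin n) ℝ)
    (M : Matrix (Fin n) (Fin n) ℝ) (S : Matrix (Fin n) (Fin p) ℝ) :
    Matrix (Fin n) (Fin n) ℝ :=
  S * Pmat A S * mpinv ((Pmat A S)ᵀ * Sᵀ * M * S * Pmat A S) * (Pmat A S)ᵀ * Sᵀ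

/-- The gradient of `f : ℝ^n → ℝ`, as a vector of partial derivatives. -/
noncomputable def gradv {n : ℕ} (f : (Fin n → ℝ) → ℝ) (x : Fin n → ℝ) : Fin n → ℝ :=
  fun i => fderiv ℝ f x (Pi.single i 1)

/-- `Z_S` is symmetric positive semidefinite and vanishes on `range(Aᵀ)`,
i.e. `range(Aᵀ) ⊆ ker(Z_S)`. -/
theorem stmt0 {m n p : ℕ} (A : Matrix (Fin m) (Fin n) ℝ)
    (M : Matrix (Fin n) (Fin n) ℝ) (hM : M.PosSemidef)
    (S : Matrix (Fin n) (Fin p) ℝ) :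
    (Zmat A M S).PosSemidef ∧
      ∀ u : Fin n → ℝ, (∃ y : Fin m → ℝ, Aᵀ.mulVec y = u) →
        (Zmat A M S).mulVec u = 0 := by
  obtain ⟨hb1, -, -, -⟩ := mpinv_spec (A * S)
  have hBP : (A * S) * Pmat A S = 0 := by
    rw [Pmat, Matrix.mul_sub, Matrix.mul_one, ← Matrix.mul_assoc, hb1, sub_self]
  have hAW : A * (S * Pmat A S) = 0 := by rw [← Matrix.mul_assoc, hBP]
  have hMT : Mᵀ = M := by rw [← ctr]; exact hM.1
  have e1 : (Pmat A S)ᵀ * Sᵀ * M * S * Pmat A S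
      = (S * Pmat A S)ᵀ * M * (S * Pmat A S) := by
    rw [transpose_mul]; simp only [Matrix.mul_assoc]
  have hZ : Zmat A M S = (S * Pmat A S) *
      mpinv ((S * Pmat A S)ᵀ * M * (S * Pmat A S)) * (S * Pmat A S)ᵀ := by
    rw [Zmat, e1, transpose_mul]
    simp only [Matrix.mul_assoc]
  generalize hWg : S * Pmat A S = W at hZ hAW
  have hGT : (Wᵀ * M * W)ᵀ = Wᵀ * M * W := by
    rw [transpose_mul, transpose_mul, transpose_transpose, hMT, Matrix.mul_assoc]
  have hXT : (mpinv (Wᵀ * M * W))ᵀ = mpinv (Wᵀ * M * W) := mpinv_symm hGT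
  obtain ⟨hg1, hg2, hg3, hg4⟩ := mpinv_spec (Wᵀ * M * W)
  constructor
  · have hKT : (W * mpinv (Wᵀ * M * W) * Wᵀ)ᵀ = W * mpinv (Wᵀ * M * W) * Wᵀ := by
      rw [transpose_mul, transpose_mul, transpose_transpose, hXT]
      simp only [Matrix.mul_assoc]
    have hZK : Zmat A M S
        = (W * mpinv (Wᵀ * M * W) * Wᵀ)ᴴ * M * (W * mpinv (Wᵀ * M * W) * Wᵀ) := by
      rw [ctr, hKT, hZ]
      calc W * mpinv (Wᵀ * M * W) * Wᵀ
          = W * (mpinv (Wᵀ * M * W) * (Wᵀ * M * W) * mpinv (Wᵀ * M * W)) * Wᵀ := by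
            rw [hg2]
        _ = W * mpinv (Wᵀ * M * W) * Wᵀ * M * (W * mpinv (Wᵀ * M * W) * Wᵀ) := by
            simp only [Matrix.mul_assoc]
    rw [hZK]
    exact hM.conjTranspose_mul_mul_same _
  · rintro u ⟨y, rfl⟩
    have hWA : Wᵀ * Aᵀ = 0 := by rw [← transpose_mul, hAW, transpose_zero]
    have hZA : Zmat A M S * Aᵀ = 0 := by
      rw [hZ, Matrix.mul_assoc, hWA, Matrix.mul_zero]
    rw [mulVec_mulVec, hZA, zero_mulVec]
end

section
/- Let Z ∈ ℝ^{n×n} be a symmetric positive semidefinite matrix and A ∈ ℝ^{m×n} such that ker(Z) = range(A^T) and Z is positive definite on ker(A). Then for every x ∈ ker(A), the extended dual norm satisfies ‖x‖_Z^* := sup{ ⟨x, u⟩ : u ∈ ℝ^n, u^T Z u ≤ 1 } = √(x^T Z† x), where Z† is the Moore–Penrose pseudoinverse of Z. -/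
open Matrix

/-
Since ker Z = range Aᵀ, every x ∈ ker A is orthogonal to ker Z, hence lies in the range of the
symmetric matrix Z: x = Z v with v = Z† x, and then xᵀ Z† x = vᵀ Z v. The sup of ⟨Z v, u⟩ over the
unit ball of the seminorm ‖·‖_Z is ‖v‖_Z, by Cauchy–Schwarz for the semi-inner product
(u, w) ↦ uᵀ Z w, attained at u = v / ‖v‖_Z. For the pseudoinverse of a symmetric Z we use the
functional calculus: Z† = f(Z) with f(t) = t⁻¹ (and f(0) = 0).
-/

theorem penrose_unique {R k l : Type*} [CommSemiring R] [Fintype k] [Fintype l]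
    (B : Matrix k l R) {X Y : Matrix l k R}
    (h1 : B * X * B = B) (h2 : X * B * X = X) (h3 : (B * X)ᵀ = B * X) (h4 : (X * B)ᵀ = X * B)
    (g1 : B * Y * B = B) (g2 : Y * B * Y = Y) (g3 : (B * Y)ᵀ = B * Y) (g4 : (Y * B)ᵀ = Y * B) :
    X = Y := by
  have hBX : B * X = B * Y :=
    calc B * X = Xᵀ * (B * Y * B)ᵀ := by rw [g1, ← transpose_mul, h3]
      _ = B * Y := by
        rw [transpose_mul, ← Matrix.mul_assoc, ← transpose_mul, h3, g3, ← Matrix.mul_assoc, h1]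
  have hXB : X * B = Y * B :=
    calc X * B = (B * Y * B)ᵀ * Xᵀ := by rw [g1, ← transpose_mul, h4]
      _ = Y * B := by
        rw [Matrix.mul_assoc, transpose_mul, Matrix.mul_assoc, ← transpose_mul, h4, g4,
          Matrix.mul_assoc, ← Matrix.mul_assoc B, h1]
  calc X = X * B * X := h2.symm
    _ = Y * B * Y := by rw [Matrix.mul_assoc, hBX, ← Matrix.mul_assoc, hXB]
    _ = Y := g2

theorem mpinv_eq_of_penrose {k l : Type*} [Fintype k] [Fintype l] (B : Matrix k l ℝ)
    {X : Matrix l k ℝ}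
    (h1 : B * X * B = B) (h2 : X * B * X = X) (h3 : (B * X)ᵀ = B * X) (h4 : (X * B)ᵀ = X * B) :
    mpinv B = X := by
  have hex : ∃ X : Matrix l k ℝ,
      B * X * B = B ∧ X * B * X = X ∧ (B * X)ᵀ = B * X ∧ (X * B)ᵀ = X * B := ⟨X, h1, h2, h3, h4⟩
  obtain ⟨c1, c2, c3, c4⟩ := hex.choose_spec
  rw [mpinv, dif_pos hex]
  exact penrose_unique B c1 c2 c3 c4 h1 h2 h3 h4

theorem Matrix.IsSymm.dotProduct_mulVec_comm {ι R : Type*} [Fintype ι] [CommSemiring R]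
    {Z : Matrix ι ι R} (hZ : Z.IsSymm) (u v : ι → R) : u ⬝ᵥ Z *ᵥ v = v ⬝ᵥ Z *ᵥ u := by
  rw [dotProduct_mulVec, ← mulVec_transpose, hZ.eq, dotProduct_comm]

namespace Matrix

variable {ι : Type*} [Fintype ι] {Z : Matrix ι ι ℝ}

section FunctionalCalculus

variable [DecidableEq ι]

theorem cfc_mul_cfc (f g : ℝ → ℝ) : cfc f Z * cfc g Z = cfc (fun t => f t * g t) Z :=
  (cfc_mul f g Z (Z.finite_real_spectrum.continuousOn f)
    (Z.finite_real_spectrum.continuousOn g)).symm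

theorem transpose_cfc (f : ℝ → ℝ) : (cfc f Z)ᵀ = cfc f Z :=
  (conjTranspose_eq_transpose_of_trivial _).symm.trans (cfc_predicate f Z)

theorem IsHermitian.mul_cfc (hZ : Z.IsHermitian) (f : ℝ → ℝ) :
    Z * cfc f Z = cfc (fun t => t * f t) Z := by
  conv_lhs => arg 1; rw [← cfc_id' ℝ Z hZ.isSelfAdjoint]
  exact cfc_mul_cfc _ _

theorem IsHermitian.cfc_mul (hZ : Z.IsHermitian) (f : ℝ → ℝ) :
    cfc f Z * Z = cfc (fun t => f t * t) Z := by
  conv_lhs => arg 2; rw [← cfc_id' ℝ Z hZ.isSelfAdjoint]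
  exact cfc_mul_cfc _ _

theorem IsHermitian.mpinv_eq_cfc_inv (hZ : Z.IsHermitian) : mpinv Z = cfc (·⁻¹ : ℝ → ℝ) Z := by
  apply mpinv_eq_of_penrose
  · rw [hZ.mul_cfc, hZ.cfc_mul]
    exact (cfc_congr fun t _ => mul_inv_mul_cancel t).trans (cfc_id' ℝ Z hZ.isSelfAdjoint)
  · rw [hZ.cfc_mul, cfc_mul_cfc]
    exact cfc_congr fun t _ => by simpa using mul_inv_mul_cancel t⁻¹
  · rw [hZ.mul_cfc, transpose_cfc]
  · rw [hZ.cfc_mul, transpose_cfc]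

theorem IsHermitian.mulVec_mpinv_mulVec (hZ : Z.IsHermitian) {x : ι → ℝ}
    (hx : ∀ w, Z *ᵥ w = 0 → x ⬝ᵥ w = 0) : Z *ᵥ (mpinv Z *ᵥ x) = x := by
  have hZZX : Z * (Z * mpinv Z) = Z := by
    rw [hZ.mpinv_eq_cfc_inv, hZ.mul_cfc, hZ.mul_cfc]
    refine (cfc_congr fun t _ => ?_).trans (cfc_id' ℝ Z hZ.isSelfAdjoint)
    rw [← mul_assoc, mul_self_mul_inv]
  set w := x - Z *ᵥ (mpinv Z *ᵥ x)
  have hZw : Z *ᵥ w = 0 := by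
    rw [mulVec_sub, mulVec_mulVec, mulVec_mulVec, Matrix.mul_assoc, hZZX, sub_self]
  have hww : w ⬝ᵥ w = 0 := by
    rw [sub_dotProduct, hx w hZw, dotProduct_comm,
      (isHermitian_iff_isSymm.1 hZ).dotProduct_mulVec_comm, hZw, dotProduct_zero, sub_zero]
  exact (sub_eq_zero.1 (dotProduct_self_eq_zero.1 hww)).symm

end FunctionalCalculus

theorem PosSemidef.dotProduct_mulVec_sq_le (hZ : Z.PosSemidef) (u v : ι → ℝ) :
    (u ⬝ᵥ Z *ᵥ v) ^ 2 ≤ (u ⬝ᵥ Z *ᵥ u) * (v ⬝ᵥ Z *ᵥ v) := by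
  have hsymm := (isHermitian_iff_isSymm.1 hZ.isHermitian).dotProduct_mulVec_comm
  have hquad : ∀ t : ℝ, 0 ≤ (v ⬝ᵥ Z *ᵥ v) * (t * t) + 2 * (u ⬝ᵥ Z *ᵥ v) * t + u ⬝ᵥ Z *ᵥ u := by
    intro t
    have := hZ.dotProduct_mulVec_nonneg (u + t • v)
    simp only [star_trivial, mulVec_add, mulVec_smul, dotProduct_add, add_dotProduct,
      dotProduct_smul, smul_dotProduct, smul_eq_mul, hsymm v u] at this
    linarith
  have := discrim_le_zero hquad
  rw [discrim] at this
  linarith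

theorem PosSemidef.sSup_dotProduct_mulVec (hZ : Z.PosSemidef) (v : ι → ℝ) :
    sSup {r : ℝ | ∃ u : ι → ℝ, u ⬝ᵥ Z *ᵥ u ≤ 1 ∧ r = (Z *ᵥ v) ⬝ᵥ u} = √(v ⬝ᵥ Z *ᵥ v) := by
  have hsymm := (isHermitian_iff_isSymm.1 hZ.isHermitian).dotProduct_mulVec_comm
  have hc : √(v ⬝ᵥ Z *ᵥ v) ^ 2 = v ⬝ᵥ Z *ᵥ v :=
    Real.sq_sqrt (by simpa using hZ.dotProduct_mulVec_nonneg v)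
  set c := √(v ⬝ᵥ Z *ᵥ v)
  refine IsGreatest.csSup_eq ⟨⟨c⁻¹ • v, ?_, ?_⟩, ?_⟩
  · -- for `c = 0` the junk value `0⁻¹ = 0` makes the witness `0`, which still works
    rw [mulVec_smul, dotProduct_smul, smul_dotProduct, smul_eq_mul, smul_eq_mul, ← hc]
    rcases eq_or_ne c 0 with h | h
    · simp [h]
    · exact (by field_simp : c⁻¹ * (c⁻¹ * c ^ 2) = 1).le
  · rw [dotProduct_smul, dotProduct_comm, ← hc, smul_eq_mul, sq, ← mul_assoc, inv_mul_mul_self]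
  · rintro _ ⟨u, hu, rfl⟩
    rw [dotProduct_comm, hsymm]
    refine (le_abs_self _).trans (Real.abs_le_sqrt ?_)
    calc (v ⬝ᵥ Z *ᵥ u) ^ 2 ≤ (v ⬝ᵥ Z *ᵥ v) * (u ⬝ᵥ Z *ᵥ u) := hZ.dotProduct_mulVec_sq_le v u
      _ ≤ v ⬝ᵥ Z *ᵥ v := by rw [← hc]; exact mul_le_of_le_one_right (sq_nonneg c) hu

end Matrix

theorem stmt4_general {m n : ℕ} (A : Matrix (Fin m) (Fin n) ℝ)
    (Z : Matrix (Fin n) (Fin n) ℝ) (hZ : Z.PosSemidef)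
    (hker : ∀ u : Fin n → ℝ, Z.mulVec u = 0 ↔ ∃ y : Fin m → ℝ, Aᵀ.mulVec y = u)
    (x : Fin n → ℝ) (hx : A.mulVec x = 0) :
    sSup {r : ℝ | ∃ u : Fin n → ℝ, u ⬝ᵥ Z.mulVec u ≤ 1 ∧ r = x ⬝ᵥ u} =
      Real.sqrt (x ⬝ᵥ (mpinv Z).mulVec x) := by
  have hperp : ∀ w, Z *ᵥ w = 0 → x ⬝ᵥ w = 0 := by
    intro w hw
    obtain ⟨y, rfl⟩ := (hker w).1 hw
    rw [dotProduct_mulVec, vecMul_transpose, hx, zero_dotProduct]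
  have hrange := hZ.isHermitian.mulVec_mpinv_mulVec hperp
  nth_rw 1 [← hrange]
  nth_rw 2 [← hrange]
  rw [hZ.sSup_dotProduct_mulVec, dotProduct_comm]

/-- for `x ∈ ker(A)`, the extended dual norm
`‖x‖_Z^* = sup{⟨x,u⟩ : uᵀZu ≤ 1}` equals `√(xᵀ Z† x)`. -/
theorem stmt4 {m n : ℕ} (A : Matrix (Fin m) (Fin n) ℝ)
    (Z : Matrix (Fin n) (Fin n) ℝ) (hZ : Z.PosSemidef)
    (hker : ∀ u : Fin n → ℝ, Z.mulVec u = 0 ↔ ∃ y : Fin m → ℝ, Aᵀ.mulVec y = u)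
    (hpd : ∀ u : Fin n → ℝ, A.mulVec u = 0 → u ≠ 0 → 0 < u ⬝ᵥ Z.mulVec u)
    (x : Fin n → ℝ) (hx : A.mulVec x = 0) :
    sSup {r : ℝ | ∃ u : Fin n → ℝ, u ⬝ᵥ Z.mulVec u ≤ 1 ∧ r = x ⬝ᵥ u} =
      Real.sqrt (x ⬝ᵥ (mpinv Z).mulVec x) :=
  stmt4_general A Z hZ hker x hx
end

section
/- Let A ∈ ℝ^{m×n}, b ∈ ℝ^m, x^0 with A x^0 = b, and let M ∈ ℝ^{n×n} be symmetric positive semidefinite and positive definite on ker(A). Let f : ℝ^n → ℝ be differentiable and satisfy f(y) ≤ f(x) + ⟨∇f(x), y − x⟩ + ½ (y−x)^T M (y−x) for all x, y ∈ x^0 + ker(A). Let S_1, …, S_N be sketch matrices with probabilities P_1, …, P_N summing to 1 and Z = Σ_{i=1}^N P_i Z_{S_i}. Then for every x ∈ x^0 + ker(A): (i) for each i, f(x − Z_{S_i} ∇f(x)) ≤ f(x) − ½ ∇f(x)^T Z_{S_i} ∇f(x); and (ii) the expected value after one random sketch step satisfies Σ_{i=1}^N P_i f(x − Z_{S_i}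 ∇f(x)) ≤ f(x) − ½ ∇f(x)^T Z ∇f(x). -/
/-!
The matrix `Z_S` is symmetric, satisfies `A Z_S = 0` because `P_S` projects onto `ker (A S)`,
and satisfies `Z_S M Z_S = Z_S` by the Penrose condition `K W K = K` for `K = W†`,
`W = P_Sᵀ Sᵀ M S P_S`. So the step `x - Z_S g` stays in `x⁰ + ker A`, and the smoothness bound
at it reads `f x - gᵀ Z_S g + ½ gᵀ Z_S M Z_S g = f x - ½ gᵀ Z_S g`. Averaging over the sketches
gives the bound in expectation, since `gᵀ Z g` is linear in `Z`.
-/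

open Matrix

namespace Matrix

section MoorePenrose

variable {R : Type*} [CommRing R] {k l : Type*} [Fintype k] [Fintype l]

def IsMoorePenroseInverse (B : Matrix k l R) (X : Matrix l k R) : Prop :=
  B * X * B = B ∧ X * B * X = X ∧ (B * X)ᵀ = B * X ∧ (X * B)ᵀ = X * B

theorem IsMoorePenroseInverse.eq {B : Matrix k l R} {X Y : Matrix l k R}
    (hX : IsMoorePenroseInverse B X) (hY : IsMoorePenroseInverse B Y) : X = Y := by
  obtain ⟨hBXB, hXBX, hBX, hXB⟩ := hX
  obtain ⟨hBYB, hYBY, hBY, hYB⟩ := hY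
  have hX_eq : X = X * B * Y := calc
    X = X * (B * X)ᵀ := by rw [hBX, ← Matrix.mul_assoc, hXBX]
    _ = X * (B * Y * B * X)ᵀ := by rw [hBYB]
    _ = X * (B * X)ᵀ * (B * Y)ᵀ := by simp only [transpose_mul, Matrix.mul_assoc]
    _ = X * B * Y := by rw [hBX, hBY, ← Matrix.mul_assoc X B X, hXBX, Matrix.mul_assoc]
  have hY_eq : Y = X * B * Y := calc
    Y = (Y * B)ᵀ * Y := by rw [hYB, hYBY]
    _ = (Y * (B * X * B))ᵀ * Y := by rw [hBXB]
    _ = (X * B)ᵀ * (Y * B)ᵀ * Y := by simp only [transpose_mul, Matrix.mul_assoc]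
    _ = X * B * Y := by rw [hXB, hYB, Matrix.mul_assoc (X * B), hYBY]
  rw [hX_eq, ← hY_eq]

theorem IsMoorePenroseInverse.transpose {B : Matrix k l R} {X : Matrix l k R}
    (h : IsMoorePenroseInverse B X) : IsMoorePenroseInverse Bᵀ Xᵀ := by
  obtain ⟨hBXB, hXBX, hBX, hXB⟩ := h
  refine ⟨?_, ?_, ?_, ?_⟩
  · simpa only [transpose_mul, Matrix.mul_assoc] using congrArg Matrix.transpose hBXB
  · simpa only [transpose_mul, Matrix.mul_assoc] using congrArg Matrix.transpose hXBX
  · simpa only [transpose_mul, transpose_transpose] using hXB.symm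
  · simpa only [transpose_mul, transpose_transpose] using hBX.symm

theorem IsMoorePenroseInverse.conj [DecidableEq l] {C X U : Matrix l l R}
    (h : IsMoorePenroseInverse C X) (hU : Uᵀ * U = 1) : IsMoorePenroseInverse (U * C * Uᵀ) (U * X * Uᵀ) := by
  obtain ⟨hCXC, hXCX, hCX, hXC⟩ := h
  have hconj : ∀ D E : Matrix l l R, U * D * Uᵀ * (U * E * Uᵀ) = U * (D * E) * Uᵀ := by
    intro D E
    simp only [Matrix.mul_assoc]
    rw [← Matrix.mul_assoc Uᵀ U, hU, Matrix.one_mul]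
  have htrans : ∀ D : Matrix l l R, (U * D * Uᵀ)ᵀ = U * Dᵀ * Uᵀ := by
    intro D
    simp only [transpose_mul, transpose_transpose, Matrix.mul_assoc]
  refine ⟨?_, ?_, ?_, ?_⟩
  · rw [hconj, hconj, hCXC]
  · rw [hconj, hconj, hXCX]
  · rw [hconj, htrans, hCX]
  · rw [hconj, htrans, hXC]

theorem isMoorePenroseInverse_diagonal {K : Type*} [Field K] [DecidableEq l] (d : l → K) :
    IsMoorePenroseInverse (diagonal d) (diagonal d⁻¹) := by
  have hinv (a : K) : a⁻¹ * a * a⁻¹ = a⁻¹ := by simpa using mul_inv_mul_cancel a⁻¹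
  refine ⟨?_, ?_, ?_, ?_⟩ <;> simp [diagonal_mul_diagonal, hinv]

end MoorePenrose

section RealMoorePenrose

variable {k l : Type*} [Fintype k] [Fintype l]

theorem exists_isMoorePenroseInverse_of_isSymm {C : Matrix l l ℝ} (hC : C.IsSymm) :
    ∃ X, IsMoorePenroseInverse C X := by
  classical
  have hCh : C.IsHermitian := isHermitian_iff_isSymm.mpr hC
  set U : Matrix l l ℝ := (hCh.eigenvectorUnitary : Matrix l l ℝ)
  have hUstar : star U = Uᵀ := conjTranspose_eq_transpose_of_trivial U
  have hU : Uᵀ * U = 1 := hUstar ▸ Unitary.coe_star_mul_self hCh.eigenvectorUnitary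
  have hspec : C = U * diagonal hCh.eigenvalues * Uᵀ := by
    rw [← hUstar]
    exact hCh.spectral_theorem
  have h := (isMoorePenroseInverse_diagonal hCh.eigenvalues).conj hU
  rw [← hspec] at h
  exact ⟨_, h⟩

theorem mul_eq_zero_of_transpose_mul_mul_eq_zero {B : Matrix k l ℝ} {Y : Matrix l l ℝ}
    (h : Bᵀ * B * Y = 0) : B * Y = 0 := by
  rw [← conjTranspose_mul_self_eq_zero, conjTranspose_eq_transpose_of_trivial, transpose_mul,
    Matrix.mul_assoc, ← Matrix.mul_assoc Bᵀ, h, Matrix.mul_zero]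

theorem exists_isMoorePenroseInverse (B : Matrix k l ℝ) : ∃ X, IsMoorePenroseInverse B X := by
  classical
  have hBB : (Bᵀ * B).IsSymm := by rw [IsSymm, transpose_mul, transpose_transpose]
  obtain ⟨G, hG⟩ := exists_isMoorePenroseInverse_of_isSymm hBB
  have hGsymm : Gᵀ = G := (hBB.eq ▸ hG.transpose).eq hG
  obtain ⟨hBBG, hGBB, _, hGBBsymm⟩ := hG
  -- `G (BᵀB)` fixes the row space of `B`, which is what the Penrose conditions for `G Bᵀ` need.
  have hBGBB : B * G * (Bᵀ * B) = B := by
    have h := mul_eq_zero_of_transpose_mul_mul_eq_zero (B := B) (Y := G * (Bᵀ * B) - 1)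
      (by rw [Matrix.mul_sub, Matrix.mul_one, ← Matrix.mul_assoc, hBBG, sub_self])
    rwa [Matrix.mul_sub, Matrix.mul_one, sub_eq_zero, ← Matrix.mul_assoc] at h
  refine ⟨G * Bᵀ, ?_, ?_, ?_, ?_⟩
  · rw [← Matrix.mul_assoc, Matrix.mul_assoc (B * G), hBGBB]
  · rw [show G * Bᵀ * B * (G * Bᵀ) = G * (Bᵀ * B) * G * Bᵀ by simp only [Matrix.mul_assoc],
      hGBB]
  · rw [transpose_mul, transpose_mul, transpose_transpose, hGsymm, Matrix.mul_assoc]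
  · rw [Matrix.mul_assoc, hGBBsymm]

end RealMoorePenrose

end Matrix

section mpinv

variable {k l : Type*} [Fintype k] [Fintype l]

theorem isMoorePenroseInverse_mpinv (B : Matrix k l ℝ) :
    IsMoorePenroseInverse B (mpinv B) := by
  have h := exists_isMoorePenroseInverse B
  unfold IsMoorePenroseInverse at h
  rw [mpinv, dif_pos h]
  exact h.choose_spec

theorem transpose_mpinv (B : Matrix k l ℝ) : (mpinv B)ᵀ = mpinv Bᵀ :=
  (isMoorePenroseInverse_mpinv B).transpose.eq (isMoorePenroseInverse_mpinv Bᵀ)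

theorem Matrix.IsSymm.mpinv {C : Matrix l l ℝ} (hC : C.IsSymm) : (mpinv C).IsSymm := by
  rw [IsSymm, transpose_mpinv, hC.eq]

end mpinv

section Sketch

variable {m n p : ℕ} (A : Matrix (Fin m) (Fin n) ℝ) (M : Matrix (Fin n) (Fin n) ℝ)
  (S : Matrix (Fin n) (Fin p) ℝ)

theorem mul_Pmat_eq_zero : A * S * Pmat A S = 0 := by
  rw [Pmat, Matrix.mul_sub, Matrix.mul_one, ← Matrix.mul_assoc,
    (isMoorePenroseInverse_mpinv _).1, sub_self]

theorem mul_Zmat_eq_zero : A * Zmat A M S = 0 := by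
  simp only [Zmat, ← Matrix.mul_assoc, mul_Pmat_eq_zero, Matrix.zero_mul]

theorem isSymm_Zmat (hM : M.IsSymm) : (Zmat A M S).IsSymm := by
  rw [IsSymm, Zmat]
  set W := (Pmat A S)ᵀ * Sᵀ * M * S * Pmat A S
  have hW : W.IsSymm := by
    rw [IsSymm]
    simp only [W, transpose_mul, transpose_transpose, hM.eq, Matrix.mul_assoc]
  have hK : (mpinv W)ᵀ = mpinv W := hW.mpinv.eq
  simp only [transpose_mul, transpose_transpose, hK, Matrix.mul_assoc]

theorem Zmat_mul_mul_Zmat : Zmat A M S * M * Zmat A M S = Zmat A M S := by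
  set W := (Pmat A S)ᵀ * Sᵀ * M * S * Pmat A S
  have hKWK : mpinv W * W * mpinv W = mpinv W := (isMoorePenroseInverse_mpinv W).2.1
  calc Zmat A M S * M * Zmat A M S
      = S * Pmat A S * (mpinv W * W * mpinv W) * (Pmat A S)ᵀ * Sᵀ := by
        simp only [Zmat, W, Matrix.mul_assoc]
    _ = Zmat A M S := by rw [hKWK, Zmat]

end Sketch

theorem dotProduct_mulVec_of_mul_mul_self {R ι : Type*} [CommRing R] [Fintype ι]
    {D M : Matrix ι ι R} (hD : D.IsSymm) (hDMD : D * M * D = D) (g : ι → R) :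
    D *ᵥ g ⬝ᵥ M *ᵥ (D *ᵥ g) = g ⬝ᵥ D *ᵥ g := by
  calc D *ᵥ g ⬝ᵥ M *ᵥ (D *ᵥ g)
      = g ᵥ* (Dᵀ * M * D) ⬝ᵥ g := by
        rw [mulVec_mulVec, dotProduct_mulVec, ← vecMul_transpose, vecMul_vecMul,
          Matrix.mul_assoc]
    _ = g ⬝ᵥ D *ᵥ g := by rw [hD.eq, hDMD, dotProduct_mulVec]

theorem apply_sub_mulVec_gradv_le {m n : ℕ} {A : Matrix (Fin m) (Fin n) ℝ} {b : Fin m → ℝ}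
    {M D : Matrix (Fin n) (Fin n) ℝ} {f : (Fin n → ℝ) → ℝ}
    (hsmooth : ∀ x y : Fin n → ℝ, A *ᵥ x = b → A *ᵥ y = b →
      f y ≤ f x + gradv f x ⬝ᵥ (y - x) + (1 / 2) * ((y - x) ⬝ᵥ M *ᵥ (y - x)))
    (hAD : A * D = 0) (hD : D.IsSymm) (hDMD : D * M * D = D)
    {x : Fin n → ℝ} (hx : A *ᵥ x = b) :
    f (x - D *ᵥ gradv f x) ≤ f x - (1 / 2) * (gradv f x ⬝ᵥ D *ᵥ gradv f x) := by
  have hfeas : A *ᵥ (x - D *ᵥ gradv f x) = b := by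
    rw [mulVec_sub, hx, mulVec_mulVec, hAD, zero_mulVec, sub_zero]
  have h := hsmooth x _ hx hfeas
  rw [sub_sub_cancel_left, mulVec_neg, neg_dotProduct_neg, dotProduct_neg,
    dotProduct_mulVec_of_mul_mul_self hD hDMD] at h
  linarith

theorem stmt5_general {m n N : ℕ} (A : Matrix (Fin m) (Fin n) ℝ) (b : Fin m → ℝ)
    (M : Matrix (Fin n) (Fin n) ℝ) (hM : M.PosSemidef)
    (f : (Fin n → ℝ) → ℝ)
    (hsmooth : ∀ x y : Fin n → ℝ, A.mulVec x = b → A.mulVec y = b →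
      f y ≤ f x + gradv f x ⬝ᵥ (y - x) + (1 / 2) * ((y - x) ⬝ᵥ M.mulVec (y - x)))
    (p : Fin N → ℕ) (S : ∀ i : Fin N, Matrix (Fin n) (Fin (p i)) ℝ)
    (P : Fin N → ℝ) (hP : ∀ i, 0 ≤ P i) (hPsum : ∑ i, P i = 1)
    (Z : Matrix (Fin n) (Fin n) ℝ) (hZ : Z = ∑ i, P i • Zmat A M (S i))
    (x : Fin n → ℝ) (hx : A.mulVec x = b) :
    (∀ i : Fin N,
        f (x - (Zmat A M (S i)).mulVec (gradv f x)) ≤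
          f x - (1 / 2) * (gradv f x ⬝ᵥ (Zmat A M (S i)).mulVec (gradv f x))) ∧
      ∑ i, P i * f (x - (Zmat A M (S i)).mulVec (gradv f x)) ≤
        f x - (1 / 2) * (gradv f x ⬝ᵥ Z.mulVec (gradv f x)) := by
  set g := gradv f x
  have hMsymm : M.IsSymm := isHermitian_iff_isSymm.mp hM.1
  have hstep : ∀ i, f (x - Zmat A M (S i) *ᵥ g) ≤ f x - (1 / 2) * (g ⬝ᵥ Zmat A M (S i) *ᵥ g) :=
    fun i => apply_sub_mulVec_gradv_le hsmooth (mul_Zmat_eq_zero A M (S i))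
      (isSymm_Zmat A M (S i) hMsymm) (Zmat_mul_mul_Zmat A M (S i)) hx
  have hquad : g ⬝ᵥ Z *ᵥ g = ∑ i, P i * (g ⬝ᵥ Zmat A M (S i) *ᵥ g) := by
    simp only [hZ, sum_mulVec, dotProduct_sum, smul_mulVec, dotProduct_smul, smul_eq_mul]
  refine ⟨hstep, ?_⟩
  calc ∑ i, P i * f (x - Zmat A M (S i) *ᵥ g)
      ≤ ∑ i, P i * (f x - (1 / 2) * (g ⬝ᵥ Zmat A M (S i) *ᵥ g)) :=
        Finset.sum_le_sum fun i _ => mul_le_mul_of_nonneg_left (hstep i) (hP i)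
    _ = f x - (1 / 2) * (g ⬝ᵥ Z *ᵥ g) := by
        simp only [hquad, mul_sub, Finset.sum_sub_distrib, ← Finset.sum_mul, hPsum, one_mul,
          Finset.mul_sum, mul_left_comm]

/-- one-step decrease of the objective for the sketch-descent update,
both per-sample and in expectation. -/
theorem stmt5 {m n N : ℕ} (A : Matrix (Fin m) (Fin n) ℝ) (b : Fin m → ℝ)
    (x0 : Fin n → ℝ) (hx0 : A.mulVec x0 = b)
    (M : Matrix (Fin n) (Fin n) ℝ) (hM : M.PosSemidef)
    (hMpd : ∀ u : Fin n → ℝ, A.mulVec u = 0 → u ≠ 0 → 0 < u ⬝ᵥ M.mulVec u)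
    (f : (Fin n → ℝ) → ℝ) (hdiff : Differentiable ℝ f)
    (hsmooth : ∀ x y : Fin n → ℝ, A.mulVec x = b → A.mulVec y = b →
      f y ≤ f x + gradv f x ⬝ᵥ (y - x) + (1 / 2) * ((y - x) ⬝ᵥ M.mulVec (y - x)))
    (p : Fin N → ℕ) (S : ∀ i : Fin N, Matrix (Fin n) (Fin (p i)) ℝ)
    (P : Fin N → ℝ) (hP : ∀ i, 0 ≤ P i) (hPsum : ∑ i, P i = 1)
    (Z : Matrix (Fin n) (Fin n) ℝ) (hZ : Z = ∑ i, P i • Zmat A M (S i))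
    (x : Fin n → ℝ) (hx : A.mulVec x = b) :
    (∀ i : Fin N,
        f (x - (Zmat A M (S i)).mulVec (gradv f x)) ≤
          f x - (1 / 2) * (gradv f x ⬝ᵥ (Zmat A M (S i)).mulVec (gradv f x))) ∧
      ∑ i, P i * f (x - (Zmat A M (S i)).mulVec (gradv f x)) ≤
        f x - (1 / 2) * (gradv f x ⬝ᵥ Z.mulVec (gradv f x)) :=
  stmt5_general A b M hM f hsmooth p S P hP hPsum Z hZ x hx
end

section
/- Let A ∈ ℝ^{m×n}, let M ∈ ℝ^{n×n} be symmetric positive definite, and let S ∈ ℝ^{n×p}. Then the matrix M^{1/2} Z_S M^{1/2} is idempotent, i.e. (M^{1/2} Z_S M^{1/2})^2 = M^{1/2} Z_S M^{1/2}; consequently every eigenvalue of M^{1/2} Z_S M^{1/2} is 0 or 1. -/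
/-!
Writing `C = M^{1/2} S P_S`, the matrix inside the pseudoinverse in `Z_S` is `Cᵀ C`, so
`M^{1/2} Z_S M^{1/2} = C (Cᵀ C)† Cᵀ`. Squaring it produces `(Cᵀ C)† (Cᵀ C) (Cᵀ C)†`, which is
`(Cᵀ C)†` by the second Penrose condition; an idempotent matrix can only have eigenvalues `0` and `1`.
-/

open Matrix

/-- The square root of a positive semidefinite matrix, as `Matrix.PosSemidef.sqrt` was defined
in the older Mathlib (removed since). -/
noncomputable def posSemidefSqrt {n : Type*} [Fintype n] [DecidableEq n] {A : Matrix n n ℝ}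
    (hA : A.PosSemidef) : Matrix n n ℝ :=
  hA.isHermitian.eigenvectorUnitary.1 * diagonal ((↑) ∘ (√·) ∘ hA.isHermitian.eigenvalues) *
  (star hA.isHermitian.eigenvectorUnitary : Matrix n n ℝ)

section PosSemidefSqrt

variable {n : Type*} [Fintype n] [DecidableEq n] {A : Matrix n n ℝ}

lemma posSemidefSqrt_eq_cfc (hA : A.PosSemidef) : posSemidefSqrt hA = cfc Real.sqrt A := by
  rw [hA.isHermitian.cfc_eq, IsHermitian.cfc, Unitary.conjStarAlgAut_apply]
  rfl

lemma posSemidefSqrt_mul_self (hA : A.PosSemidef) :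
    posSemidefSqrt hA * posSemidefSqrt hA = A := by
  rw [posSemidefSqrt_eq_cfc, ← cfc_mul Real.sqrt Real.sqrt A]
  conv_rhs => rw [← cfc_id' ℝ A hA.isHermitian]
  refine cfc_congr fun x hx => Real.mul_self_sqrt ?_
  rw [hA.isHermitian.spectrum_real_eq_range_eigenvalues] at hx
  obtain ⟨i, rfl⟩ := hx
  exact hA.eigenvalues_nonneg i

lemma posSemidefSqrt_transpose (hA : A.PosSemidef) :
    (posSemidefSqrt hA)ᵀ = posSemidefSqrt hA := by
  rw [← conjTranspose_eq_transpose_of_trivial, posSemidefSqrt_eq_cfc]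
  exact cfc_predicate Real.sqrt A

end PosSemidefSqrt

-- No existence proof of the pseudoinverse is needed: the fallback value `0` also satisfies
-- this Penrose condition.
lemma mpinv_mul_mul_mpinv {k l : Type*} [Fintype k] [Fintype l] (B : Matrix k l ℝ) :
    mpinv B * B * mpinv B = mpinv B := by
  unfold mpinv
  split_ifs with h
  · exact h.choose_spec.2.1
  · simp

lemma isIdempotentElem_mul_mul_of_mul_mul_eq {n p α : Type*} [Fintype n] [Fintype p]
    [Semiring α] (C : Matrix n p α) (D : Matrix p n α) {X : Matrix p p α}
    (hX : X * (D * C) * X = X) : IsIdempotentElem (C * X * D) := by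
  calc C * X * D * (C * X * D) = C * (X * (D * C) * X) * D := by simp only [Matrix.mul_assoc]
    _ = C * X * D := by rw [hX]

lemma IsIdempotentElem.eq_zero_or_eq_one_of_mulVec_eq_smul {n : Type*} [Fintype n]
    [DecidableEq n] {Q : Matrix n n ℝ} (hQ : IsIdempotentElem Q) {r : ℝ} {v : n → ℝ}
    (hv : v ≠ 0) (h : Q *ᵥ v = r • v) : r = 0 ∨ r = 1 := by
  have hr : Module.End.HasEigenvalue Q.toLin' r :=
    Module.End.hasEigenvalue_of_hasEigenvector
      ⟨Module.End.mem_eigenspace_iff.2 (by rwa [Matrix.toLin'_apply]), hv⟩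
  simpa using hQ.spectrum_subset ℝ (Matrix.spectrum_toLin' Q ▸ hr.mem_spectrum)

lemma mul_Zmat_mul_eq {m n p : ℕ} (A : Matrix (Fin m) (Fin n) ℝ) (S : Matrix (Fin n) (Fin p) ℝ)
    {M R : Matrix (Fin n) (Fin n) ℝ} (hRR : R * R = M) (hR : Rᵀ = R) :
    R * Zmat A M S * R =
      R * S * Pmat A S * mpinv ((R * S * Pmat A S)ᵀ * (R * S * Pmat A S)) *
        (R * S * Pmat A S)ᵀ := by
  simp only [Zmat, transpose_mul, hR, ← hRR, Matrix.mul_assoc]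

/-- `M^{1/2} Z_S M^{1/2}` is idempotent, hence its eigenvalues are 0 or 1. -/
theorem stmt6 {m n p : ℕ} (A : Matrix (Fin m) (Fin n) ℝ)
    (M : Matrix (Fin n) (Fin n) ℝ) (hM : M.PosDef)
    (S : Matrix (Fin n) (Fin p) ℝ)
    (Q : Matrix (Fin n) (Fin n) ℝ)
    (hQ : Q = posSemidefSqrt hM.posSemidef * Zmat A M S * posSemidefSqrt hM.posSemidef) :
    Q * Q = Q ∧
      ∀ (r : ℝ) (v : Fin n → ℝ), v ≠ 0 → Q.mulVec v = r • v → r = 0 ∨ r = 1 := by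
  rw [mul_Zmat_mul_eq A S (posSemidefSqrt_mul_self _) (posSemidefSqrt_transpose _)] at hQ
  have hidem : IsIdempotentElem Q :=
    hQ ▸ isIdempotentElem_mul_mul_of_mul_mul_eq _ _ (mpinv_mul_mul_mpinv _)
  exact ⟨hidem, fun _ _ hv h => hidem.eq_zero_or_eq_one_of_mulVec_eq_smul hv h⟩
end

section
/- Let ν > 0 and define the real sequence (γ_k) by γ_0 = 1/ν and, for each k ≥ 0, γ_{k+1} the largest solution of γ_{k+1}^2 − (1/ν) γ_{k+1} = γ_k^2, i.e. γ_{k+1} = ( 1/ν + √(1/ν² + 4 γ_k²) ) / 2. Then the sequence (γ_k) is non-decreasing and γ_k ≥ (k+2)/(2ν) for every k ≥ 0. -/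
open Matrix

/-- the sequence `γ_0 = 1/ν`, `γ_{k+1} = (1/ν + √(1/ν² + 4γ_k²))/2`
is non-decreasing and satisfies `γ_k ≥ (k+2)/(2ν)`. -/
theorem stmt13 (ν : ℝ) (hν : 0 < ν) (γ : ℕ → ℝ)
    (hγ0 : γ 0 = 1 / ν)
    (hγs : ∀ k : ℕ, γ (k + 1) = (1 / ν + Real.sqrt (1 / ν ^ 2 + 4 * γ k ^ 2)) / 2) :
    (∀ k : ℕ, γ k ≤ γ (k + 1)) ∧ ∀ k : ℕ, (k + 2 : ℝ) / (2 * ν) ≤ γ k := by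
  have hν' : 0 < 1 / ν := by positivity
  have hsq : ∀ k : ℕ, 2 * γ k ≤ Real.sqrt (1 / ν ^ 2 + 4 * γ k ^ 2) := by
    intro k
    have h2 : Real.sqrt ((2 * γ k) ^ 2) ≤ Real.sqrt (1 / ν ^ 2 + 4 * γ k ^ 2) := by
      apply Real.sqrt_le_sqrt
      have : (0:ℝ) ≤ 1 / ν ^ 2 := by positivity
      nlinarith
    calc 2 * γ k ≤ |2 * γ k| := le_abs_self _
      _ = Real.sqrt ((2 * γ k) ^ 2) := (Real.sqrt_sq_eq_abs _).symm
      _ ≤ _ := h2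
  have key : ∀ k : ℕ, γ k ≤ γ (k + 1) := by
    intro k
    rw [hγs k]
    have := hsq k
    linarith
  refine ⟨key, ?_⟩
  intro k
  induction k with
  | zero =>
    rw [hγ0]
    push_cast
    rw [div_le_div_iff₀ (by positivity) hν]
    ring_nf
    nlinarith
  | succ n ih =>
    rw [hγs n]
    have h1 := hsq n
    have h2 : ((n:ℝ) + 2) / (2 * ν) ≤ γ n := ih
    rw [div_le_iff₀ (by positivity)] at h2 ⊢
    push_cast
    have hν1 : 1 / ν * ν = 1 := by field_simp
    nlinarith [mul_le_mul_of_nonneg_right h1 hν.le]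
end
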